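/- arXiv:0910.5490 — 2 statements merged into one kernel-verified Lean document; each statement's English description precedes it below -/
import Mathlib

section
/- Let 0 ≤ δ < 1/4, let (H₁, H₂, H₃) be a δ-representation of the sphere by n×n complex matrices, and let K₁, K₂, K₃ be Hermitian n×n matrices. If ‖H₁ − K₁‖ + ‖H₂ − K₂‖ + ‖H₃ − K₃‖ < √(1 − 4δ), then S(K₁,K₂,K₃) is invertible (so the Bott index of (K₁,K₂,K₃) is defined) and bott(K₁,K₂,K₃) = bott(H₁,H₂,H₃). -/
open Matrix

noncomputable section

namespace AC

variable {m : Type*} [Fintype m] [DecidableEq m]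

/-- The ℓ² operator norm of a complex matrix. -/
def opNorm (A : Matrix m m ℂ) : ℝ :=
  ‖Matrix.toEuclideanCLM (𝕜 := ℂ) A‖

/-- `(H₁, H₂, H₃)` is a δ-representation of the sphere: each `Hᵣ` is Hermitian, all
commutators have ℓ²-operator norm at most `δ`, and `‖H₁² + H₂² + H₃² − I‖ ≤ δ`. -/
def IsSphereRep (δ : ℝ) (H₁ H₂ H₃ : Matrix m m ℂ) : Prop :=
  H₁.IsHermitian ∧ H₂.IsHermitian ∧ H₃.IsHermitian ∧
  opNorm (H₁ * H₂ - H₂ * H₁) ≤ δ ∧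
  opNorm (H₁ * H₃ - H₃ * H₁) ≤ δ ∧
  opNorm (H₂ * H₃ - H₃ * H₂) ≤ δ ∧
  opNorm (H₁ ^ 2 + H₂ ^ 2 + H₃ ^ 2 - 1) ≤ δ

/-- The 2n×2n Hermitian block matrix `S(H₁,H₂,H₃) = [[H₃, H₁ − iH₂], [H₁ + iH₂, −H₃]]`. -/
def sphS (H₁ H₂ H₃ : Matrix m m ℂ) : Matrix (m ⊕ m) (m ⊕ m) ℂ :=
  Matrix.fromBlocks H₃ (H₁ - Complex.I • H₂) (H₁ + Complex.I • H₂) (-H₃)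

open Classical in
/-- The Bott index: the number of positive eigenvalues (with multiplicity) of
`S(H₁,H₂,H₃)` minus `n`.  (Junk value `0` if `S(H₁,H₂,H₃)` is not Hermitian.) -/
def bott (H₁ H₂ H₃ : Matrix m m ℂ) : ℤ :=
  if h : (sphS H₁ H₂ H₃).IsHermitian then
    ((Finset.univ.filter fun i => 0 < h.eigenvalues i).card : ℤ) - Fintype.card m
  else 0

end AC

/-! Write `S = S(H₁,H₂,H₃)`. The blocks of `S² − 1` are `H₁² + H₂² + H₃² − 1 ± i[H₁,H₂]` on the
diagonal and `±[H₁,H₃] + i[H₂,H₃]` off it, so `‖S² − 1‖ ≤ 4δ` and every eigenvalue of `S` has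
absolute value at least `g = √(1 − 4δ)`. Since `S` is linear in its arguments with
`‖S(D₁,D₂,D₃)‖ ≤ ‖D₁‖ + ‖D₂‖ + ‖D₃‖`, we get `‖S(H) − S(K)‖ < g`.

A Hermitian perturbation smaller than such a gap cannot change the inertia: the eigenvectors of
`S(H)` with eigenvalue `≥ g` and those of `S(K)` with eigenvalue `≤ 0` span subspaces meeting only
in `0`, because on a common vector `x` the quadratic forms would differ by at least `g‖x‖²`.
Counting dimensions this way, and again with the signs reversed, shows that `S(K)` has no zero
eigenvalue and as many positive eigenvalues as `S(H)`. -/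

open scoped Matrix.Norms.L2Operator InnerProductSpace

section

open Finset Module RCLike

namespace Matrix

variable {𝕜 m n : Type*} [RCLike 𝕜] [Fintype m] [Fintype n] [DecidableEq m] [DecidableEq n]

lemma l2_opNorm_fromBlocks_diag_le (A : Matrix m m 𝕜) (D : Matrix n n 𝕜) :
    ‖fromBlocks A 0 0 D‖ ≤ max ‖A‖ ‖D‖ := by
  refine (toEuclideanCLM (𝕜 := 𝕜) (fromBlocks A 0 0 D)).opNorm_le_bound
    (le_max_of_le_left (norm_nonneg _)) fun x => ?_
  set x₁ : EuclideanSpace 𝕜 m := WithLp.toLp 2 (x.ofLp ∘ Sum.inl)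
  set x₂ : EuclideanSpace 𝕜 n := WithLp.toLp 2 (x.ofLp ∘ Sum.inr)
  have hx : ‖x‖ ^ 2 = ‖x₁‖ ^ 2 + ‖x₂‖ ^ 2 := by
    simp only [EuclideanSpace.norm_sq_eq, Fintype.sum_sum_type, Function.comp_apply, x₁, x₂]
  have hMx : ‖toEuclideanCLM (𝕜 := 𝕜) (fromBlocks A 0 0 D) x‖ ^ 2 =
      ‖toEuclideanCLM (𝕜 := 𝕜) A x₁‖ ^ 2 + ‖toEuclideanCLM (𝕜 := 𝕜) D x₂‖ ^ 2 := by
    simp [EuclideanSpace.norm_sq_eq, Fintype.sum_sum_type, fromBlocks_mulVec, x₁, x₂]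
  refine (sq_le_sq₀ (norm_nonneg _) (by positivity)).mp ?_
  rw [hMx, mul_pow, hx, mul_add]
  simp only [← mul_pow]
  gcongr
  · exact ((toEuclideanCLM (𝕜 := 𝕜) A).le_opNorm x₁).trans (by gcongr; exact le_max_left _ _)
  · exact ((toEuclideanCLM (𝕜 := 𝕜) D).le_opNorm x₂).trans (by gcongr; exact le_max_right _ _)

lemma l2_opNorm_fromBlocks_antidiag_le (B : Matrix m n 𝕜) (C : Matrix n m 𝕜) :
    ‖fromBlocks 0 B C 0‖ ≤ max ‖B‖ ‖C‖ := by
  have hsq : (fromBlocks 0 B C 0)ᴴ * fromBlocks 0 B C 0 = fromBlocks (Cᴴ * C) 0 0 (Bᴴ * B) := by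
    simp [fromBlocks_conjTranspose, fromBlocks_multiply]
  have h := l2_opNorm_fromBlocks_diag_le (Cᴴ * C) (Bᴴ * B)
  rw [← hsq] at h
  simp only [l2_opNorm_conjTranspose_mul_self] at h
  refine (mul_self_le_mul_self_iff (norm_nonneg _) (le_max_of_le_left (norm_nonneg _))).mpr
    (h.trans (max_le ?_ ?_))
  · exact mul_self_le_mul_self (norm_nonneg _) (le_max_right _ _)
  · exact mul_self_le_mul_self (norm_nonneg _) (le_max_left _ _)

end Matrix

lemma ContinuousLinearMap.finrank_add_finrank_le_of_norm_sub_lt {𝕜 E : Type*} [RCLike 𝕜]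
    [NormedAddCommGroup E] [InnerProductSpace 𝕜 E] [FiniteDimensional 𝕜 E]
    {T S : E →L[𝕜] E} {g : ℝ} (hTS : ‖T - S‖ < g) {U W : Submodule 𝕜 E}
    (hU : ∀ x ∈ U, g * ‖x‖ ^ 2 ≤ re ⟪x, T x⟫_𝕜) (hW : ∀ x ∈ W, re ⟪x, S x⟫_𝕜 ≤ 0) :
    finrank 𝕜 U + finrank 𝕜 W ≤ finrank 𝕜 E := by
  refine Submodule.finrank_add_finrank_le_of_disjoint <|
    Submodule.disjoint_def.mpr fun x hxU hxW => ?_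
  by_contra hx
  have hpos : 0 < ‖x‖ ^ 2 := by positivity
  have : g * ‖x‖ ^ 2 ≤ ‖T - S‖ * ‖x‖ ^ 2 :=
    calc g * ‖x‖ ^ 2 ≤ re ⟪x, (T - S) x⟫_𝕜 := by
          rw [_root_.sub_apply, inner_sub_right, map_sub]
          linarith [hU x hxU, hW x hxW]
      _ ≤ ‖x‖ * ‖(T - S) x‖ := re_inner_le_norm _ _
      _ ≤ ‖x‖ * (‖T - S‖ * ‖x‖) := by gcongr; exact (T - S).le_opNorm x
      _ = ‖T - S‖ * ‖x‖ ^ 2 := by ring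
  exact hTS.not_ge (le_of_mul_le_mul_right this hpos)

namespace Matrix.IsHermitian

variable {𝕜 n : Type*} [RCLike 𝕜] [Fintype n] [DecidableEq n] {A : Matrix n n 𝕜}
  (hA : A.IsHermitian)

lemma toEuclideanCLM_eigenvectorBasis (i : n) :
    toEuclideanCLM (𝕜 := 𝕜) A (hA.eigenvectorBasis i) =
      (hA.eigenvalues i : 𝕜) • hA.eigenvectorBasis i := by
  refine WithLp.ofLp_injective 2 ?_
  rw [ofLp_toEuclideanCLM, hA.mulVec_eigenvectorBasis, WithLp.ofLp_smul,
    RCLike.real_smul_eq_coe_smul (K := 𝕜)]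

lemma eigenvectorBasis_repr_toEuclideanCLM (x : EuclideanSpace 𝕜 n) (i : n) :
    hA.eigenvectorBasis.repr (toEuclideanCLM (𝕜 := 𝕜) A x) i =
      hA.eigenvalues i * hA.eigenvectorBasis.repr x i := by
  have hsymm := isSymmetric_toEuclideanLin_iff.mpr hA (hA.eigenvectorBasis i) x
  rw [← coe_toEuclideanCLM_eq_toEuclideanLin, ContinuousLinearMap.coe_coe,
    toEuclideanCLM_eigenvectorBasis hA, inner_smul_left, conj_ofReal] at hsymm
  rw [OrthonormalBasis.repr_apply_apply, OrthonormalBasis.repr_apply_apply, ← hsymm]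

lemma re_inner_toEuclideanCLM_self (x : EuclideanSpace 𝕜 n) :
    re ⟪x, toEuclideanCLM (𝕜 := 𝕜) A x⟫_𝕜 =
      ∑ i, hA.eigenvalues i * ‖hA.eigenvectorBasis.repr x i‖ ^ 2 := by
  rw [← hA.eigenvectorBasis.repr.inner_map_map, PiLp.inner_apply, map_sum]
  refine Finset.sum_congr rfl fun i _ => ?_
  rw [eigenvectorBasis_repr_toEuclideanCLM hA, inner_apply, mul_assoc, mul_conj,
    ← ofReal_pow, ← ofReal_mul, ofReal_re]

lemma abs_eigenvalues_sq_sub_one_le (i : n) : |hA.eigenvalues i ^ 2 - 1| ≤ ‖A * A - 1‖ := by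
  have hv : ‖hA.eigenvectorBasis i‖ = 1 := hA.eigenvectorBasis.orthonormal.1 i
  have happly : toEuclideanCLM (𝕜 := 𝕜) (A * A - 1) (hA.eigenvectorBasis i) =
      ((hA.eigenvalues i ^ 2 - 1 : ℝ) : 𝕜) • hA.eigenvectorBasis i := by
    rw [map_sub, map_mul, map_one, _root_.sub_apply, mul_apply_eq_comp, one_apply_eq_self,
      toEuclideanCLM_eigenvectorBasis hA, map_smul,
      toEuclideanCLM_eigenvectorBasis hA, smul_smul, ofReal_sub, ofReal_one, sub_smul, one_smul,
      ofReal_pow, sq]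
  have := (toEuclideanCLM (𝕜 := 𝕜) (A * A - 1)).le_opNorm (hA.eigenvectorBasis i)
  rwa [happly, norm_smul, hv, mul_one, mul_one, norm_ofReal] at this

def eigenvectorSpan (s : Finset n) : Submodule 𝕜 (EuclideanSpace 𝕜 n) :=
  Submodule.span 𝕜 (Set.range fun i : s => hA.eigenvectorBasis i)

lemma finrank_eigenvectorSpan (s : Finset n) : finrank 𝕜 (hA.eigenvectorSpan s) = #s := by
  rw [eigenvectorSpan, finrank_span_eq_card, Fintype.card_coe]
  exact (hA.eigenvectorBasis.orthonormal.comp _ Subtype.val_injective).linearIndependent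

lemma eigenvectorBasis_repr_eq_zero {s : Finset n} {x : EuclideanSpace 𝕜 n}
    (hx : x ∈ hA.eigenvectorSpan s) {i : n} (hi : i ∉ s) : hA.eigenvectorBasis.repr x i = 0 := by
  rw [OrthonormalBasis.repr_apply_apply, ← Submodule.mem_orthogonal_singleton_iff_inner_right]
  refine Submodule.span_le.mpr ?_ hx
  rintro _ ⟨j, rfl⟩
  exact Submodule.mem_orthogonal_singleton_iff_inner_right.mpr
    (hA.eigenvectorBasis.orthonormal.2 (ne_of_mem_of_not_mem j.2 hi).symm)

lemma le_re_inner_of_mem_eigenvectorSpan {s : Finset n} {c : ℝ}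
    (hs : ∀ i ∈ s, c ≤ hA.eigenvalues i) {x : EuclideanSpace 𝕜 n}
    (hx : x ∈ hA.eigenvectorSpan s) : c * ‖x‖ ^ 2 ≤ re ⟪x, toEuclideanCLM (𝕜 := 𝕜) A x⟫_𝕜 := by
  rw [re_inner_toEuclideanCLM_self hA, ← hA.eigenvectorBasis.repr.norm_map,
    EuclideanSpace.norm_sq_eq, mul_sum]
  refine sum_le_sum fun i _ => ?_
  by_cases hi : i ∈ s
  · exact mul_le_mul_of_nonneg_right (hs i hi) (sq_nonneg _)
  · simp [eigenvectorBasis_repr_eq_zero hA hx hi]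

lemma re_inner_le_of_mem_eigenvectorSpan {s : Finset n} {c : ℝ}
    (hs : ∀ i ∈ s, hA.eigenvalues i ≤ c) {x : EuclideanSpace 𝕜 n}
    (hx : x ∈ hA.eigenvectorSpan s) : re ⟪x, toEuclideanCLM (𝕜 := 𝕜) A x⟫_𝕜 ≤ c * ‖x‖ ^ 2 := by
  rw [re_inner_toEuclideanCLM_self hA, ← hA.eigenvectorBasis.repr.norm_map,
    EuclideanSpace.norm_sq_eq, mul_sum]
  refine sum_le_sum fun i _ => ?_
  by_cases hi : i ∈ s
  · exact mul_le_mul_of_nonneg_right (hs i hi) (sq_nonneg _)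
  · simp [eigenvectorBasis_repr_eq_zero hA hx hi]

lemma isUnit_of_eigenvalues_ne_zero (h : ∀ i, hA.eigenvalues i ≠ 0) : IsUnit A := by
  rw [isUnit_iff_isUnit_det, hA.det_eq_prod_eigenvalues, isUnit_iff_ne_zero, prod_ne_zero_iff]
  exact fun i _ => ofReal_ne_zero.mpr (h i)

variable {B : Matrix n n 𝕜} (hB : B.IsHermitian) {g : ℝ}

lemma card_le_card_eigenvalues_pos (hAB : ‖A - B‖ < g) :
    #{i | g ≤ hA.eigenvalues i} ≤ #{j | 0 < hB.eigenvalues j} := by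
  have h := ContinuousLinearMap.finrank_add_finrank_le_of_norm_sub_lt
    (T := toEuclideanCLM (𝕜 := 𝕜) A) (S := toEuclideanCLM (𝕜 := 𝕜) B)
    (U := hA.eigenvectorSpan {i | g ≤ hA.eigenvalues i})
    (W := hB.eigenvectorSpan {j | ¬ 0 < hB.eigenvalues j})
    (by rw [← map_sub]; exact hAB)
    (fun x hx => hA.le_re_inner_of_mem_eigenvectorSpan (fun i hi => (mem_filter.mp hi).2) hx)
    (fun x hx => by
      simpa using hB.re_inner_le_of_mem_eigenvectorSpan (c := 0)
        (fun j hj => not_lt.mp (mem_filter.mp hj).2) hx)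
  rw [finrank_eigenvectorSpan, finrank_eigenvectorSpan, finrank_euclideanSpace] at h
  have := card_filter_add_card_filter_not (s := univ) (fun j => 0 < hB.eigenvalues j)
  rw [card_univ] at this
  omega

lemma card_le_card_eigenvalues_neg (hAB : ‖A - B‖ < g) :
    #{i | hA.eigenvalues i ≤ -g} ≤ #{j | hB.eigenvalues j < 0} := by
  have h := ContinuousLinearMap.finrank_add_finrank_le_of_norm_sub_lt
    (T := -toEuclideanCLM (𝕜 := 𝕜) A) (S := -toEuclideanCLM (𝕜 := 𝕜) B)
    (U := hA.eigenvectorSpan {i | hA.eigenvalues i ≤ -g})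
    (W := hB.eigenvectorSpan {j | ¬ hB.eigenvalues j < 0})
    (by rw [neg_sub_neg, norm_sub_rev, ← map_sub]; exact hAB)
    (fun x hx => by
      have := hA.re_inner_le_of_mem_eigenvectorSpan (fun i hi => (mem_filter.mp hi).2) hx
      simp only [_root_.neg_apply, inner_neg_right, map_neg]
      linarith)
    (fun x hx => by
      have := hB.le_re_inner_of_mem_eigenvectorSpan (c := 0)
        (fun j hj => not_lt.mp (mem_filter.mp hj).2) hx
      simp only [_root_.neg_apply, inner_neg_right, map_neg]
      linarith)
  rw [finrank_eigenvectorSpan, finrank_eigenvectorSpan, finrank_euclideanSpace] at h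
  have := card_filter_add_card_filter_not (s := univ) (fun j => hB.eigenvalues j < 0)
  rw [card_univ] at this
  omega

theorem eigenvalues_ne_zero_and_card_pos_eq (hgap : ∀ i, g ≤ |hA.eigenvalues i|)
    (hAB : ‖A - B‖ < g) :
    (∀ j, hB.eigenvalues j ≠ 0) ∧ #{j | 0 < hB.eigenvalues j} = #{i | 0 < hA.eigenvalues i} := by
  have hg : 0 < g := (norm_nonneg _).trans_lt hAB
  have hApos : #{i | g ≤ hA.eigenvalues i} = #{i | 0 < hA.eigenvalues i} := by
    refine congrArg card (filter_congr fun i _ => ⟨hg.trans_le, fun h => ?_⟩)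
    simpa [abs_of_pos h] using hgap i
  have hAneg : #{i | hA.eigenvalues i ≤ -g} = #{i | ¬ 0 < hA.eigenvalues i} := by
    refine congrArg card (filter_congr fun i _ => ⟨fun h => by linarith, fun h => ?_⟩)
    have := hgap i
    rw [abs_of_nonpos (not_lt.mp h)] at this
    linarith
  have hA_card := card_filter_add_card_filter_not (s := univ) (fun i => 0 < hA.eigenvalues i)
  have hB_card := card_filter_add_card_filter_not (s := univ) (fun j => 0 < hB.eigenvalues j)
  have hB_sub : filter (fun j => hB.eigenvalues j < 0) univ ⊆
      filter (fun j => ¬ 0 < hB.eigenvalues j) univ :=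
    fun j hj => by
      simp only [mem_filter, mem_univ, true_and] at hj ⊢
      exact not_lt.mpr hj.le
  have hpos := card_le_card_eigenvalues_pos hA hB hAB
  have hneg := card_le_card_eigenvalues_neg hA hB hAB
  refine ⟨fun j hj => ?_, by have := card_le_card hB_sub; omega⟩
  have : #{j | hB.eigenvalues j < 0} < #{j | ¬ 0 < hB.eigenvalues j} :=
    card_lt_card ((ssubset_iff_of_subset hB_sub).mpr ⟨j, by simp [hj]⟩)
  omega

end Matrix.IsHermitian

end

namespace AC

variable {m : Type*}

lemma sphS_isHermitian {H₁ H₂ H₃ : Matrix m m ℂ} (h₁ : H₁.IsHermitian) (h₂ : H₂.IsHermitian)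
    (h₃ : H₃.IsHermitian) : (sphS H₁ H₂ H₃).IsHermitian := by
  rw [IsHermitian, sphS, fromBlocks_conjTranspose]
  simp [conjTranspose_smul, h₁.eq, h₂.eq, h₃.eq, sub_eq_add_neg]

lemma sphS_sub (H₁ H₂ H₃ K₁ K₂ K₃ : Matrix m m ℂ) :
    sphS H₁ H₂ H₃ - sphS K₁ K₂ K₃ = sphS (H₁ - K₁) (H₂ - K₂) (H₃ - K₃) := by
  rw [sub_eq_iff_eq_add, sphS, sphS, sphS, fromBlocks_add, fromBlocks_inj]
  refine ⟨?_, ?_, ?_, ?_⟩ <;> module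

variable [Fintype m] [DecidableEq m]

lemma norm_sphS_le (D₁ D₂ D₃ : Matrix m m ℂ) : ‖sphS D₁ D₂ D₃‖ ≤ ‖D₁‖ + ‖D₂‖ + ‖D₃‖ := by
  have hsplit : sphS D₁ D₂ D₃ = fromBlocks D₃ 0 0 (-D₃) + fromBlocks 0 D₁ D₁ 0 +
      fromBlocks 0 (-(Complex.I • D₂)) (Complex.I • D₂) 0 := by
    simp [sphS, fromBlocks_add, sub_eq_add_neg]
  calc ‖sphS D₁ D₂ D₃‖
      ≤ max ‖D₃‖ ‖-D₃‖ + max ‖D₁‖ ‖D₁‖ + max ‖-(Complex.I • D₂)‖ ‖Complex.I • D₂‖ := by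
        rw [hsplit]
        refine (norm_add₃_le).trans (add_le_add (add_le_add ?_ ?_) ?_)
        · exact l2_opNorm_fromBlocks_diag_le _ _
        · exact l2_opNorm_fromBlocks_antidiag_le _ _
        · exact l2_opNorm_fromBlocks_antidiag_le _ _
    _ = ‖D₁‖ + ‖D₂‖ + ‖D₃‖ := by
        simp only [norm_neg, max_self, norm_smul, Complex.norm_I, one_mul]
        ring

lemma sphS_mul_self_sub_one (H₁ H₂ H₃ : Matrix m m ℂ) :
    sphS H₁ H₂ H₃ * sphS H₁ H₂ H₃ - 1 =
      fromBlocks ((H₁ ^ 2 + H₂ ^ 2 + H₃ ^ 2 - 1) + Complex.I • (H₁ * H₂ - H₂ * H₁)) 0 0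
        ((H₁ ^ 2 + H₂ ^ 2 + H₃ ^ 2 - 1) - Complex.I • (H₁ * H₂ - H₂ * H₁)) +
      fromBlocks 0 (-(H₁ * H₃ - H₃ * H₁) + Complex.I • (H₂ * H₃ - H₃ * H₂))
        ((H₁ * H₃ - H₃ * H₁) + Complex.I • (H₂ * H₃ - H₃ * H₂)) 0 := by
  rw [sub_eq_iff_eq_add', ← fromBlocks_one, fromBlocks_add, fromBlocks_add, sphS,
    fromBlocks_multiply, fromBlocks_inj]
  refine ⟨?_, ?_, ?_, ?_⟩ <;>
    simp only [mul_add, add_mul, mul_sub, sub_mul, neg_mul, mul_neg, smul_mul_assoc,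
      mul_smul_comm, sq] <;>
    match_scalars <;> simp

lemma norm_sphS_mul_self_sub_one_le {δ : ℝ} {H₁ H₂ H₃ : Matrix m m ℂ}
    (h : IsSphereRep δ H₁ H₂ H₃) : ‖sphS H₁ H₂ H₃ * sphS H₁ H₂ H₃ - 1‖ ≤ 4 * δ := by
  obtain ⟨-, -, -, h₁₂, h₁₃, h₂₃, hsq⟩ := h
  simp only [opNorm, ← cstar_norm_def] at h₁₂ h₁₃ h₂₃ hsq
  have hI (X : Matrix m m ℂ) : ‖Complex.I • X‖ = ‖X‖ := by rw [norm_smul, Complex.norm_I, one_mul]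
  rw [sphS_mul_self_sub_one]
  calc _ ≤ ‖fromBlocks _ 0 0 _‖ + ‖fromBlocks 0 _ _ 0‖ := norm_add_le _ _
    _ ≤ 2 * δ + 2 * δ := by
      gcongr
      · refine (l2_opNorm_fromBlocks_diag_le _ _).trans (max_le ?_ ?_)
        · linarith [norm_add_le (H₁ ^ 2 + H₂ ^ 2 + H₃ ^ 2 - 1)
            (Complex.I • (H₁ * H₂ - H₂ * H₁)), hI (H₁ * H₂ - H₂ * H₁)]
        · linarith [norm_sub_le (H₁ ^ 2 + H₂ ^ 2 + H₃ ^ 2 - 1)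
            (Complex.I • (H₁ * H₂ - H₂ * H₁)), hI (H₁ * H₂ - H₂ * H₁)]
      · refine (l2_opNorm_fromBlocks_antidiag_le _ _).trans (max_le ?_ ?_)
        · linarith [norm_add_le (-(H₁ * H₃ - H₃ * H₁)) (Complex.I • (H₂ * H₃ - H₃ * H₂)),
            hI (H₂ * H₃ - H₃ * H₂), norm_neg (H₁ * H₃ - H₃ * H₁)]
        · linarith [norm_add_le (H₁ * H₃ - H₃ * H₁) (Complex.I • (H₂ * H₃ - H₃ * H₂)),
            hI (H₂ * H₃ - H₃ * H₂)]
    _ = 4 * δ := by ring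

end AC

theorem bott_stable_general {n : ℕ} (δ : ℝ)
    (H₁ H₂ H₃ K₁ K₂ K₃ : Matrix (Fin n) (Fin n) ℂ)
    (hrep : AC.IsSphereRep δ H₁ H₂ H₃)
    (hK₁ : K₁.IsHermitian) (hK₂ : K₂.IsHermitian) (hK₃ : K₃.IsHermitian)
    (hclose : AC.opNorm (H₁ - K₁) + AC.opNorm (H₂ - K₂) + AC.opNorm (H₃ - K₃) <
      Real.sqrt (1 - 4 * δ)) :
    IsUnit (AC.sphS K₁ K₂ K₃) ∧
    AC.bott K₁ K₂ K₃ = AC.bott H₁ H₂ H₃ := by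
  have hSH := AC.sphS_isHermitian hrep.1 hrep.2.1 hrep.2.2.1
  have hSK := AC.sphS_isHermitian hK₁ hK₂ hK₃
  have hgap (i) : √(1 - 4 * δ) ≤ |hSH.eigenvalues i| := by
    have := (hSH.abs_eigenvalues_sq_sub_one_le i).trans (AC.norm_sphS_mul_self_sub_one_le hrep)
    rw [← Real.sqrt_sq_eq_abs]
    exact Real.sqrt_le_sqrt (by linarith [(abs_le.mp this).1])
  have hnear : ‖AC.sphS H₁ H₂ H₃ - AC.sphS K₁ K₂ K₃‖ < √(1 - 4 * δ) := by
    rw [AC.sphS_sub]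
    exact (AC.norm_sphS_le _ _ _).trans_lt hclose
  obtain ⟨hne, hcard⟩ := hSH.eigenvalues_ne_zero_and_card_pos_eq hSK hgap hnear
  refine ⟨hSK.isUnit_of_eigenvalues_ne_zero hne, ?_⟩
  rw [AC.bott, AC.bott, dif_pos hSK, dif_pos hSH]
  convert congrArg (fun c : ℕ => (c : ℤ) - Fintype.card (Fin n)) hcard

/-- Lemma (`lem:indexIsStable`): if `(H₁,H₂,H₃)` is a δ-representation of the sphere with
`0 ≤ δ < 1/4`, `(K₁,K₂,K₃)` are Hermitian, and
`‖H₁−K₁‖ + ‖H₂−K₂‖ + ‖H₃−K₃‖ < √(1−4δ)`, then `S(K₁,K₂,K₃)` is invertible (so the Bott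
index of `(K₁,K₂,K₃)` is defined) and `bott(K₁,K₂,K₃) = bott(H₁,H₂,H₃)`. -/
theorem bott_stable {n : ℕ} (δ : ℝ) (hδ0 : 0 ≤ δ) (hδ : δ < 1/4)
    (H₁ H₂ H₃ K₁ K₂ K₃ : Matrix (Fin n) (Fin n) ℂ)
    (hrep : AC.IsSphereRep δ H₁ H₂ H₃)
    (hK₁ : K₁.IsHermitian) (hK₂ : K₂.IsHermitian) (hK₃ : K₃.IsHermitian)
    (hclose : AC.opNorm (H₁ - K₁) + AC.opNorm (H₂ - K₂) + AC.opNorm (H₃ - K₃) <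
      Real.sqrt (1 - 4 * δ)) :
    IsUnit (AC.sphS K₁ K₂ K₃) ∧
    AC.bott K₁ K₂ K₃ = AC.bott H₁ H₂ H₃ :=
  bott_stable_general δ H₁ H₂ H₃ K₁ K₂ K₃ hrep hK₁ hK₂ hK₃ hclose
end
end

section
/- Let 0 ≤ δ < 1/4 and let (H₁, H₂, H₃) be a δ-representation of the sphere by n×n complex matrices. Then replacing any one of the three matrices by its negative flips the sign of the Bott index: bott(−H₁, H₂, H₃) = bott(H₁, −H₂, H₃) = bott(H₁, H₂, −H₃) = −bott(H₁, H₂, H₃) (each of these triples is again a δ-representation of the sphere, so the indices are defined). -/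
open Matrix

noncomputable section

/-! Negating one of `H₁, H₂, H₃` replaces `S = S(H₁,H₂,H₃)` by a matrix similar to `-S`
(conjugate by `[[0,1],[1,0]]`, `[[0,1],[-1,0]]` or `[[1,0],[0,-1]]`), so its eigenvalues are
those of `S` negated. Since `S² = 1 + E` where `E` has blocks of norm at most `2δ`, we get
`‖E‖ ≤ 4δ < 1`, so `S` is invertible: none of its `2n` eigenvalues vanishes, and the positive
eigenvalues of `-S` are the `2n - N₊` negative ones of `S`. Hence the index changes sign. -/

open Matrix Polynomial Finset
open scoped Matrix.Norms.L2Operator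

section BlockNorm

variable {𝕜 : Type*} [RCLike 𝕜] {l m n o : Type*} [Fintype l] [Fintype m] [Fintype n] [Fintype o]

lemma EuclideanSpace.norm_sq_sum_type (x : EuclideanSpace 𝕜 (m ⊕ n)) :
    ‖x‖ ^ 2 = ‖(EuclideanSpace.equiv m 𝕜).symm (fun i => x (.inl i))‖ ^ 2 +
      ‖(EuclideanSpace.equiv n 𝕜).symm (fun i => x (.inr i))‖ ^ 2 := by
  simp [EuclideanSpace.norm_sq_eq, Fintype.sum_sum_type]

variable [DecidableEq n] [DecidableEq o]

lemma Matrix.l2_opNorm_le_of_mulVec {A : Matrix m n 𝕜} {c : ℝ} (hc : 0 ≤ c)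
    (h : ∀ x : EuclideanSpace 𝕜 n, ‖(EuclideanSpace.equiv m 𝕜).symm (A *ᵥ x)‖ ≤ c * ‖x‖) :
    ‖A‖ ≤ c :=
  ContinuousLinearMap.opNorm_le_bound _ hc h

lemma Matrix.l2_norm_mulVec_add_mulVec_le {P : Matrix m n 𝕜} {Q : Matrix m o 𝕜} {c : ℝ}
    (hP : ‖P‖ ≤ c) (hQ : ‖Q‖ ≤ c) (f : EuclideanSpace 𝕜 n) (g : EuclideanSpace 𝕜 o) :
    ‖(EuclideanSpace.equiv m 𝕜).symm (P *ᵥ f + Q *ᵥ g)‖ ≤ c * (‖f‖ + ‖g‖) := calc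
  _ ≤ ‖P‖ * ‖f‖ + ‖Q‖ * ‖g‖ :=
    (norm_add_le _ _).trans (add_le_add (P.l2_opNorm_mulVec f) (Q.l2_opNorm_mulVec g))
  _ ≤ c * (‖f‖ + ‖g‖) := by
    rw [mul_add]; gcongr

lemma Matrix.l2_opNorm_fromBlocks_le {A : Matrix m n 𝕜} {B : Matrix m o 𝕜} {C : Matrix l n 𝕜}
    {D : Matrix l o 𝕜} {c : ℝ} (hA : ‖A‖ ≤ c) (hB : ‖B‖ ≤ c) (hC : ‖C‖ ≤ c) (hD : ‖D‖ ≤ c) :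
    ‖fromBlocks A B C D‖ ≤ 2 * c := by
  have hc : 0 ≤ c := (norm_nonneg A).trans hA
  refine l2_opNorm_le_of_mulVec (by positivity) fun x => ?_
  set f := (EuclideanSpace.equiv n 𝕜).symm (fun i => x (.inl i))
  set g := (EuclideanSpace.equiv o 𝕜).symm (fun i => x (.inr i))
  have hx : ‖x‖ ^ 2 = ‖f‖ ^ 2 + ‖g‖ ^ 2 := EuclideanSpace.norm_sq_sum_type x
  have hMx : ‖(EuclideanSpace.equiv (m ⊕ l) 𝕜).symm (fromBlocks A B C D *ᵥ x)‖ ^ 2 =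
      ‖(EuclideanSpace.equiv m 𝕜).symm (A *ᵥ f + B *ᵥ g)‖ ^ 2 +
        ‖(EuclideanSpace.equiv l 𝕜).symm (C *ᵥ f + D *ᵥ g)‖ ^ 2 := by
    rw [EuclideanSpace.norm_sq_sum_type, fromBlocks_mulVec]
    rfl
  have hAB := l2_norm_mulVec_add_mulVec_le hA hB f g
  have hCD := l2_norm_mulVec_add_mulVec_le hC hD f g
  rw [← pow_le_pow_iff_left₀ (norm_nonneg _) (by positivity) two_ne_zero, hMx]
  calc _ ≤ (c * (‖f‖ + ‖g‖)) ^ 2 + (c * (‖f‖ + ‖g‖)) ^ 2 := by gcongr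
    _ ≤ (2 * c * ‖x‖) ^ 2 := by nlinarith [sq_nonneg (‖f‖ - ‖g‖), sq_nonneg c]

end BlockNorm

section NegatedSpectrum

variable {ι : Type*} [Fintype ι] [DecidableEq ι]

lemma Matrix.charpoly_conj_of_mul_eq_one {R : Type*} [CommRing R] {P Q : Matrix ι ι R}
    (h : Q * P = 1) (A : Matrix ι ι R) : (P * A * Q).charpoly = A.charpoly := by
  rw [charpoly_mul_comm, ← mul_assoc, h, one_mul]

lemma Matrix.IsHermitian.roots_charpoly_neg {A : Matrix ι ι ℂ} (hA : A.IsHermitian) :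
    (-A).charpoly.roots = univ.val.map (Complex.ofReal ∘ (-hA.eigenvalues)) := by
  rw [← cfc_neg_id (R := ℝ) A hA.isSelfAdjoint, hA.charpoly_cfc_eq, Polynomial.roots_prod]
  · simp
  · simp [Finset.prod_ne_zero_iff, X_add_C_ne_zero]

lemma Matrix.IsHermitian.eigenvalues_map_eq_neg_of_charpoly_eq {A B : Matrix ι ι ℂ}
    (hA : A.IsHermitian) (hB : B.IsHermitian) (h : B.charpoly = (-A).charpoly) :
    univ.val.map hB.eigenvalues = univ.val.map (-hA.eigenvalues) := by
  apply Multiset.map_injective Complex.ofReal_injective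
  rw [Multiset.map_map, Multiset.map_map, ← hA.roots_charpoly_neg, ← h]
  exact hB.roots_charpoly_eq_eigenvalues.symm

lemma Matrix.IsHermitian.eigenvalues_ne_zero {A : Matrix ι ι ℂ} (hA : A.IsHermitian)
    (hA₀ : IsUnit A) (i : ι) : hA.eigenvalues i ≠ 0 := by
  have hdet := (isUnit_iff_isUnit_det A).mp hA₀
  rw [hA.det_eq_prod_eigenvalues, isUnit_iff_ne_zero, Finset.prod_ne_zero_iff] at hdet
  exact Complex.ofReal_ne_zero.mp (hdet i (mem_univ i))

lemma Matrix.IsHermitian.card_pos_eigenvalues_add_of_charpoly_eq_neg {A B : Matrix ι ι ℂ}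
    (hA : A.IsHermitian) (hA₀ : IsUnit A) (hB : B.IsHermitian) (h : B.charpoly = (-A).charpoly) :
    #{i | 0 < hB.eigenvalues i} + #{i | 0 < hA.eigenvalues i} = Fintype.card ι := by
  have hpos_neg : #{i | 0 < hB.eigenvalues i} = #{i | ¬ 0 < hA.eigenvalues i} := by
    simp only [card_def, filter_val]
    simpa [Multiset.countP_map, neg_pos, (hA.eigenvalues_ne_zero hA₀ _).le_iff_lt] using
      congrArg (Multiset.countP (0 < ·)) (hA.eigenvalues_map_eq_neg_of_charpoly_eq hB h)
  rw [hpos_neg, add_comm, card_filter_add_card_filter_not, card_univ]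

end NegatedSpectrum

namespace AC

lemma isHermitian_sphS {m : Type*} {H₁ H₂ H₃ : Matrix m m ℂ} (h₁ : H₁.IsHermitian)
    (h₂ : H₂.IsHermitian) (h₃ : H₃.IsHermitian) : (sphS H₁ H₂ H₃).IsHermitian := by
  rw [IsHermitian, sphS, fromBlocks_conjTranspose]
  simp [conjTranspose_add, conjTranspose_smul, h₁.eq, h₂.eq, h₃.eq, neg_smul, sub_eq_add_neg]

variable {m : Type*} [Fintype m] [DecidableEq m]

lemma opNorm_eq_l2_opNorm (A : Matrix m m ℂ) : opNorm A = ‖A‖ := rfl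

lemma opNorm_neg_mul_sub_mul_neg (A B : Matrix m m ℂ) :
    opNorm (-A * B - B * -A) = opNorm (A * B - B * A) := by
  rw [show -A * B - B * -A = -(A * B - B * A) by noncomm_ring, opNorm_eq_l2_opNorm, norm_neg]
  rfl

lemma opNorm_mul_neg_sub_neg_mul (A B : Matrix m m ℂ) :
    opNorm (A * -B - -B * A) = opNorm (A * B - B * A) := by
  rw [show A * -B - -B * A = -(A * B - B * A) by noncomm_ring, opNorm_eq_l2_opNorm, norm_neg]
  rfl

namespace IsSphereRep

variable {δ : ℝ} {H₁ H₂ H₃ : Matrix m m ℂ}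

lemma neg₁ (h : IsSphereRep δ H₁ H₂ H₃) : IsSphereRep δ (-H₁) H₂ H₃ := by
  obtain ⟨h₁, h₂, h₃, c₁₂, c₁₃, c₂₃, hsq⟩ := h
  refine ⟨h₁.neg, h₂, h₃, ?_, ?_, c₂₃, ?_⟩
  · rw [opNorm_neg_mul_sub_mul_neg]; exact c₁₂
  · rw [opNorm_neg_mul_sub_mul_neg]; exact c₁₃
  · rw [neg_sq]; exact hsq

lemma neg₂ (h : IsSphereRep δ H₁ H₂ H₃) : IsSphereRep δ H₁ (-H₂) H₃ := by
  obtain ⟨h₁, h₂, h₃, c₁₂, c₁₃, c₂₃, hsq⟩ := h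
  refine ⟨h₁, h₂.neg, h₃, ?_, c₁₃, ?_, ?_⟩
  · rw [opNorm_mul_neg_sub_neg_mul]; exact c₁₂
  · rw [opNorm_neg_mul_sub_mul_neg]; exact c₂₃
  · rw [neg_sq]; exact hsq

lemma neg₃ (h : IsSphereRep δ H₁ H₂ H₃) : IsSphereRep δ H₁ H₂ (-H₃) := by
  obtain ⟨h₁, h₂, h₃, c₁₂, c₁₃, c₂₃, hsq⟩ := h
  refine ⟨h₁, h₂, h₃.neg, c₁₂, ?_, ?_, ?_⟩
  · rw [opNorm_mul_neg_sub_neg_mul]; exact c₁₃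
  · rw [opNorm_mul_neg_sub_neg_mul]; exact c₂₃
  · rw [neg_sq]; exact hsq

end IsSphereRep

lemma sphS_mul_self (H₁ H₂ H₃ : Matrix m m ℂ) :
    sphS H₁ H₂ H₃ * sphS H₁ H₂ H₃ =
      1 + fromBlocks ((H₁ ^ 2 + H₂ ^ 2 + H₃ ^ 2 - 1) + Complex.I • (H₁ * H₂ - H₂ * H₁))
        (-(H₁ * H₃ - H₃ * H₁) + Complex.I • (H₂ * H₃ - H₃ * H₂))
        ((H₁ * H₃ - H₃ * H₁) + Complex.I • (H₂ * H₃ - H₃ * H₂))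
        ((H₁ ^ 2 + H₂ ^ 2 + H₃ ^ 2 - 1) - Complex.I • (H₁ * H₂ - H₂ * H₁)) := by
  rw [← fromBlocks_one]
  simp only [sphS, fromBlocks_multiply, fromBlocks_add, fromBlocks_inj]
  refine ⟨?_, ?_, ?_, ?_⟩ <;>
    · simp only [mul_add, add_mul, sub_mul, mul_sub, Matrix.smul_mul, Matrix.mul_smul, smul_smul,
        Complex.I_mul_I, neg_smul, one_smul, pow_two, Matrix.neg_mul, Matrix.mul_neg, smul_sub,
        smul_neg]
      abel

lemma isUnit_sphS {δ : ℝ} (hδ : δ < 1 / 4) {H₁ H₂ H₃ : Matrix m m ℂ}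
    (h : IsSphereRep δ H₁ H₂ H₃) : IsUnit (sphS H₁ H₂ H₃) := by
  obtain ⟨-, -, -, c₁₂, c₁₃, c₂₃, hsq⟩ := h
  simp only [opNorm_eq_l2_opNorm] at c₁₂ c₁₃ c₂₃ hsq
  have hI (A : Matrix m m ℂ) : ‖Complex.I • A‖ = ‖A‖ := by rw [norm_smul, Complex.norm_I, one_mul]
  have hE : ‖sphS H₁ H₂ H₃ * sphS H₁ H₂ H₃ - 1‖ ≤ 2 * (2 * δ) := by
    rw [sphS_mul_self, add_sub_cancel_left]
    apply l2_opNorm_fromBlocks_le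
    · exact (norm_add_le _ _).trans (by rw [hI]; linarith)
    · exact (norm_add_le _ _).trans (by rw [hI, norm_neg]; linarith)
    · exact (norm_add_le _ _).trans (by rw [hI]; linarith)
    · exact (norm_sub_le _ _).trans (by rw [hI]; linarith)
  have hsq_unit : IsUnit (sphS H₁ H₂ H₃ * sphS H₁ H₂ H₃) := by
    rw [← sub_sub_cancel 1 (sphS H₁ H₂ H₃ * sphS H₁ H₂ H₃)]
    exact isUnit_one_sub_of_norm_lt_one (by rw [norm_sub_rev]; linarith)
  rw [isUnit_iff_isUnit_det, det_mul] at hsq_unit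
  exact (isUnit_iff_isUnit_det _).mpr (isUnit_of_mul_isUnit_left hsq_unit)

lemma charpoly_sphS_neg₁ (H₁ H₂ H₃ : Matrix m m ℂ) :
    (sphS (-H₁) H₂ H₃).charpoly = (-sphS H₁ H₂ H₃).charpoly := by
  have hconj :
      sphS (-H₁) H₂ H₃ = fromBlocks 0 1 1 0 * -sphS H₁ H₂ H₃ * fromBlocks 0 1 1 0 := by
    simp only [sphS, fromBlocks_neg, fromBlocks_multiply, fromBlocks_inj]
    refine ⟨?_, ?_, ?_, ?_⟩ <;> simp [sub_eq_add_neg, add_comm]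
  rw [hconj, charpoly_conj_of_mul_eq_one (by simp [fromBlocks_multiply, fromBlocks_one])]

lemma charpoly_sphS_neg₂ (H₁ H₂ H₃ : Matrix m m ℂ) :
    (sphS H₁ (-H₂) H₃).charpoly = (-sphS H₁ H₂ H₃).charpoly := by
  have hconj :
      sphS H₁ (-H₂) H₃ = fromBlocks 0 1 (-1) 0 * -sphS H₁ H₂ H₃ * fromBlocks 0 (-1) 1 0 := by
    simp only [sphS, fromBlocks_neg, fromBlocks_multiply, fromBlocks_inj]
    refine ⟨?_, ?_, ?_, ?_⟩ <;> simp [sub_eq_add_neg, add_comm]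
  rw [hconj, charpoly_conj_of_mul_eq_one (by simp [fromBlocks_multiply, fromBlocks_one])]

lemma charpoly_sphS_neg₃ (H₁ H₂ H₃ : Matrix m m ℂ) :
    (sphS H₁ H₂ (-H₃)).charpoly = (-sphS H₁ H₂ H₃).charpoly := by
  have hconj :
      sphS H₁ H₂ (-H₃) = fromBlocks 1 0 0 (-1) * -sphS H₁ H₂ H₃ * fromBlocks 1 0 0 (-1) := by
    simp only [sphS, fromBlocks_neg, fromBlocks_multiply, fromBlocks_inj]
    refine ⟨?_, ?_, ?_, ?_⟩ <;> simp [sub_eq_add_neg, add_comm]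
  rw [hconj, charpoly_conj_of_mul_eq_one (by simp [fromBlocks_multiply, fromBlocks_one])]

lemma bott_eq_neg_of_charpoly_eq {G₁ G₂ G₃ H₁ H₂ H₃ : Matrix m m ℂ}
    (hG : (sphS G₁ G₂ G₃).IsHermitian) (hH : (sphS H₁ H₂ H₃).IsHermitian)
    (hH₀ : IsUnit (sphS H₁ H₂ H₃)) (h : (sphS G₁ G₂ G₃).charpoly = (-sphS H₁ H₂ H₃).charpoly) :
    bott G₁ G₂ G₃ = -bott H₁ H₂ H₃ := by
  have hcard := hH.card_pos_eigenvalues_add_of_charpoly_eq_neg hH₀ hG h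
  rw [Fintype.card_sum] at hcard
  rw [bott, bott, dif_pos hG, dif_pos hH]
  omega

end AC

theorem bott_neg_general {n : ℕ} (δ : ℝ) (hδ : δ < 1/4)
    (H₁ H₂ H₃ : Matrix (Fin n) (Fin n) ℂ)
    (hrep : AC.IsSphereRep δ H₁ H₂ H₃) :
    AC.IsSphereRep δ (-H₁) H₂ H₃ ∧
    AC.IsSphereRep δ H₁ (-H₂) H₃ ∧
    AC.IsSphereRep δ H₁ H₂ (-H₃) ∧
    AC.bott (-H₁) H₂ H₃ = -AC.bott H₁ H₂ H₃ ∧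
    AC.bott H₁ (-H₂) H₃ = -AC.bott H₁ H₂ H₃ ∧
    AC.bott H₁ H₂ (-H₃) = -AC.bott H₁ H₂ H₃ := by
  have ⟨h₁, h₂, h₃, _⟩ := hrep
  have hS := AC.isHermitian_sphS h₁ h₂ h₃
  have hS₀ := AC.isUnit_sphS hδ hrep
  exact ⟨hrep.neg₁, hrep.neg₂, hrep.neg₃,
    AC.bott_eq_neg_of_charpoly_eq (AC.isHermitian_sphS h₁.neg h₂ h₃) hS hS₀
      (AC.charpoly_sphS_neg₁ H₁ H₂ H₃),
    AC.bott_eq_neg_of_charpoly_eq (AC.isHermitian_sphS h₁ h₂.neg h₃) hS hS₀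
      (AC.charpoly_sphS_neg₂ H₁ H₂ H₃),
    AC.bott_eq_neg_of_charpoly_eq (AC.isHermitian_sphS h₁ h₂ h₃.neg) hS hS₀
      (AC.charpoly_sphS_neg₃ H₁ H₂ H₃)⟩

/-- Lemma (negating one matrix flips the sign of the index): if `(H₁,H₂,H₃)` is a
δ-representation of the sphere with `0 ≤ δ < 1/4`, then each of `(−H₁,H₂,H₃)`,
`(H₁,−H₂,H₃)`, `(H₁,H₂,−H₃)` is again a δ-representation of the sphere, and each has
Bott index `−bott(H₁,H₂,H₃)`. -/
theorem bott_neg {n : ℕ} (δ : ℝ) (hδ0 : 0 ≤ δ) (hδ : δ < 1/4)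
    (H₁ H₂ H₃ : Matrix (Fin n) (Fin n) ℂ)
    (hrep : AC.IsSphereRep δ H₁ H₂ H₃) :
    AC.IsSphereRep δ (-H₁) H₂ H₃ ∧
    AC.IsSphereRep δ H₁ (-H₂) H₃ ∧
    AC.IsSphereRep δ H₁ H₂ (-H₃) ∧
    AC.bott (-H₁) H₂ H₃ = -AC.bott H₁ H₂ H₃ ∧
    AC.bott H₁ (-H₂) H₃ = -AC.bott H₁ H₂ H₃ ∧
    AC.bott H₁ H₂ (-H₃) = -AC.bott H₁ H₂ H₃ :=
  bott_neg_general δ hδ H₁ H₂ H₃ hrep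
end
end
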